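/- Let 𝒢 be a temporal graph with n vertices and lifetime T such that each snapshot has at least one edge, let ω ≥ 0, and fix an integer k ≥ 2. Then the non-normalised temporal k-modularity satisfies q̃*_{k,ω}(𝒢) ≥ (1 − 1/k)·q̃*_ω(𝒢) + n·ω·(T−1)/k. -/

import Mathlib

open Finset
open scoped Classical

namespace TemporalModularity

noncomputable section

variable {V : Type*} [Fintype V] {P : Type*}

/-- Twice the number of edges of `G` with both endpoints in `A`
(the sum over ordered pairs of vertices of `A` of the adjacency indicator). -/
def twoE (G : SimpleGraph V) (A : Finset V) : ℝ :=
  ∑ u ∈ A, ∑ v ∈ A, if G.Adj u v then (1 : ℝ) else 0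

/-- The degree of `v` in `G`, as a real number. -/
def deg (G : SimpleGraph V) (v : V) : ℝ :=
  ∑ u : V, if G.Adj v u then (1 : ℝ) else 0

/-- The number of edges of `G` (half the sum of the degrees), as a real number. -/
def numEdges (G : SimpleGraph V) : ℝ := (∑ v : V, deg G v) / 2

/-- The volume of `A` in `G`: the sum of the degrees of the vertices of `A`. -/
def vol (G : SimpleGraph V) (A : Finset V) : ℝ := ∑ v ∈ A, deg G v

/-- The part with label `p` of the vertex partition induced by the labelling `π`. -/
def part (π : V → P) (p : P) : Finset V := univ.filter fun v => π v = p

/-- `Σ_{A ∈ 𝒜} (2 e_G(A) − vol_G(A)² / (2m))`, where `𝒜` is the partition of the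
vertices induced by the labelling `π` (empty parts contribute zero). -/
def snapTerm (G : SimpleGraph V) (π : V → P) : ℝ :=
  ∑ p ∈ univ.image π,
    (twoE G (part π p) - vol G (part π p) ^ 2 / (2 * numEdges G))

/-- The static modularity `q(G,𝒜) = Σ_{A ∈ 𝒜} (e(A)/m − vol(A)²/(4m²))` of the
partition induced by the labelling `π`. -/
def staticQ (G : SimpleGraph V) (π : V → P) : ℝ :=
  ∑ p ∈ univ.image π,
    (twoE G (part π p) / (2 * numEdges G) -
      vol G (part π p) ^ 2 / (4 * numEdges G ^ 2))

/-- The maximum static modularity `q*(G)` over all vertex partitions (every partition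
of `V` is induced by some labelling `V → V`). -/
def staticQStar (G : SimpleGraph V) : ℝ := ⨆ π : V → V, staticQ G π

/-- The loyalty contribution `L(𝒜)` of the temporal partition `π` with lifetime `T`. -/
def loyalty (T : ℕ) (π : V → ℕ → P) : ℝ :=
  ∑ v : V, ∑ t ∈ Icc 1 (T - 1), if π v t = π v (t + 1) then (1 : ℝ) else 0

/-- The per-time loyalty `L(𝒜,t)` of the temporal partition `π`. -/
def loyaltyAt (π : V → ℕ → P) (t : ℕ) : ℝ :=
  ∑ v : V, if π v t = π v (t + 1) then (1 : ℝ) else 0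

/-- The normalisation factor `μ_ω(𝒢) = ω n (T−1)/2 + Σ_t m_t`. -/
def mu (G : ℕ → SimpleGraph V) (T : ℕ) (ω : ℝ) : ℝ :=
  ω * (Fintype.card V) * ((T : ℝ) - 1) / 2 + ∑ t ∈ Icc 1 T, numEdges (G t)

/-- The non-normalised temporal modularity of the restriction of the temporal graph
`G` to the time interval `[a,b]`, for the partition `π`. -/
def qTildeI (G : ℕ → SimpleGraph V) (a b : ℕ) (ω : ℝ) (π : V → ℕ → P) : ℝ :=
  (∑ t ∈ Icc a b, snapTerm (G t) fun v => π v t) +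
    ω * ∑ v : V, ∑ t ∈ Icc a (b - 1), if π v t = π v (t + 1) then (1 : ℝ) else 0

/-- The non-normalised temporal modularity `q̃_ω(𝒢,𝒜)` of the partition `π` of the
temporal graph `G` with lifetime `T`. -/
def qTilde (G : ℕ → SimpleGraph V) (T : ℕ) (ω : ℝ) (π : V → ℕ → P) : ℝ :=
  qTildeI G 1 T ω π

/-- The temporal modularity `q_ω(𝒢,𝒜)` of the partition `π` of the temporal graph `G`
with lifetime `T`. -/
def qTemp (G : ℕ → SimpleGraph V) (T : ℕ) (ω : ℝ) (π : V → ℕ → P) : ℝ :=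
  qTilde G T ω π / (2 * mu G T ω)

/-- The temporal modularity `q*_ω(𝒢)`: the maximum of `q_ω(𝒢,𝒜)` over all partitions
(every partition of `V × [T]` is induced by some labelling into `ℕ`). -/
def qTempStar (G : ℕ → SimpleGraph V) (T : ℕ) (ω : ℝ) : ℝ :=
  ⨆ π : V → ℕ → ℕ, qTemp G T ω π

/-- The temporal `k`-modularity `q*_{k,ω}(𝒢)`: the maximum of `q_ω(𝒢,𝒜)` over all
partitions into at most `k` parts. -/
def qTempStarK (G : ℕ → SimpleGraph V) (T : ℕ) (ω : ℝ) (k : ℕ) : ℝ :=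
  ⨆ π : V → ℕ → Fin k, qTemp G T ω π

/-- The maximum non-normalised temporal modularity of the restriction of `G` to the
time interval `[a,b]`, over all partitions. -/
def qTildeStarI (G : ℕ → SimpleGraph V) (a b : ℕ) (ω : ℝ) : ℝ :=
  ⨆ π : V → ℕ → ℕ, qTildeI G a b ω π

/-- The non-normalised temporal modularity `q̃*_ω(𝒢)` of the temporal graph `G` with
lifetime `T`. -/
def qTildeStar (G : ℕ → SimpleGraph V) (T : ℕ) (ω : ℝ) : ℝ := qTildeStarI G 1 T ω

/-- The maximum non-normalised temporal modularity of the restriction of `G` to `[a,b]`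
over partitions into at most `c` parts. -/
def qTildeStarKI (G : ℕ → SimpleGraph V) (a b : ℕ) (ω : ℝ) (c : ℕ) : ℝ :=
  ⨆ π : V → ℕ → Fin c, qTildeI G a b ω π

/-- The non-normalised temporal `c`-modularity `q̃*_{c,ω}(𝒢)`. -/
def qTildeStarK (G : ℕ → SimpleGraph V) (T : ℕ) (ω : ℝ) (c : ℕ) : ℝ :=
  qTildeStarKI G 1 T ω c

end

/-!
Relabel the parts of a partition by a uniformly random map `c` from its (finitely many) labels
to `k` labels. Two vertices that share a part keep sharing it, and any other pair is merged with
probability `1/k`. As the entries of the modularity matrix of a snapshot sum to zero, the expected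
snapshot term is `(1 - 1/k)` times the original one, and the expected loyalty is
`(1 - 1/k) L + n (T - 1)/k`. Some relabelling is at least as good as the average.
-/

theorem sum_ite_apply_eq_apply {α β : Type*} [Fintype α] [Fintype β] [Nonempty β] (a b : α) :
    ∑ c : α → β, (if c a = c b then (1 : ℝ) else 0) =
      Fintype.card (α → β) *
        ((1 - 1 / Fintype.card β) * (if a = b then 1 else 0) + 1 / Fintype.card β) := by
  by_cases hab : a = b
  · subst hab; simp
  have hsplit : ∑ c : α → β, (if c a = c b then (1 : ℝ) else 0) =
      Fintype.card ({j // j ≠ b} → β) := by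
    rw [← (Equiv.funSplitAt b β).symm.sum_comp, Fintype.sum_prod_type, Finset.sum_comm]
    simp [Equiv.funSplitAt, hab]
  have hcard : (Fintype.card (α → β) : ℝ) =
      Fintype.card β * Fintype.card ({j // j ≠ b} → β) := by
    rw [Fintype.card_congr (Equiv.funSplitAt b β), Fintype.card_prod, Nat.cast_mul]
  rw [hsplit, hcard, if_neg hab]
  field_simp
  ring

section Snapshot

variable {V : Type*} [Fintype V] {P Q : Type*} (G : SimpleGraph V)

noncomputable def modMatrix (u v : V) : ℝ :=
  (if G.Adj u v then 1 else 0) - deg G u * deg G v / (2 * numEdges G)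

theorem deg_nonneg (v : V) : 0 ≤ deg G v := by
  unfold deg; positivity

theorem sum_deg : ∑ v, deg G v = 2 * numEdges G := by
  unfold numEdges; ring

theorem numEdges_nonneg : 0 ≤ numEdges G :=
  div_nonneg (sum_nonneg fun v _ => deg_nonneg G v) zero_le_two

-- With `x / 0 = 0` this also holds for edgeless graphs, where both terms vanish.
theorem sum_sum_modMatrix : ∑ u, ∑ v, modMatrix G u v = 0 := by
  have hadj : ∑ u, ∑ v, (if G.Adj u v then (1 : ℝ) else 0) = 2 * numEdges G := sum_deg G
  have hdeg : ∑ u, ∑ v, deg G u * deg G v / (2 * numEdges G) = 2 * numEdges G := by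
    simp_rw [← Finset.sum_div, ← Finset.sum_mul_sum, sum_deg, mul_self_div_self]
  simp only [modMatrix, Finset.sum_sub_distrib, hadj, hdeg, sub_self]

theorem modMatrix_le_one (u v : V) : modMatrix G u v ≤ 1 := by
  have : 0 ≤ deg G u * deg G v / (2 * numEdges G) := by
    have := deg_nonneg G u; have := deg_nonneg G v; have := numEdges_nonneg G; positivity
  unfold modMatrix; split_ifs <;> linarith

theorem snapTerm_eq_sum_modMatrix (σ : V → P) :
    snapTerm G σ = ∑ u, ∑ v, modMatrix G u v * if σ u = σ v then 1 else 0 := by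
  have hpart : ∀ p, twoE G (part σ p) - vol G (part σ p) ^ 2 / (2 * numEdges G) =
      ∑ u ∈ part σ p, ∑ v ∈ part σ p, modMatrix G u v := by
    intro p
    simp only [twoE, vol, modMatrix, sq, Finset.sum_mul_sum, Finset.sum_div,
      ← Finset.sum_sub_distrib]
  unfold snapTerm
  simp_rw [hpart]
  rw [← Finset.sum_fiberwise_of_maps_to (g := σ) (t := univ.image σ)
    (fun u _ => mem_image_of_mem σ (mem_univ u))]
  refine sum_congr rfl fun p _ => sum_congr rfl fun u hu => ?_
  rw [part, sum_filter, (mem_filter.1 hu).2]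
  simp only [mul_ite, mul_one, mul_zero, eq_comm]

theorem snapTerm_comp_of_injOn {σ : V → P} {ι : P → Q} (hι : Set.InjOn ι (Set.range σ)) :
    snapTerm G (fun v => ι (σ v)) = snapTerm G σ := by
  simp only [snapTerm_eq_sum_modMatrix, hι.eq_iff (Set.mem_range_self _) (Set.mem_range_self _)]

theorem snapTerm_le_card_sq (σ : V → P) : snapTerm G σ ≤ Fintype.card V ^ 2 := by
  rw [snapTerm_eq_sum_modMatrix]
  calc _ ≤ ∑ _u : V, ∑ _v : V, (1 : ℝ) := by
        gcongr with u _ v _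
        split_ifs
        · simpa using modMatrix_le_one G u v
        · simp
    _ = Fintype.card V ^ 2 := by simp [sq]

theorem sum_snapTerm_comp [Fintype P] {β : Type*} [Fintype β] [Nonempty β] (σ : V → P) :
    ∑ c : P → β, snapTerm G (fun v => c (σ v)) =
      Fintype.card (P → β) * (1 - 1 / Fintype.card β) * snapTerm G σ := by
  simp_rw [snapTerm_eq_sum_modMatrix]
  rw [Finset.sum_comm]
  simp_rw [Finset.sum_comm (s := (univ : Finset (P → β))), ← Finset.mul_sum,
    sum_ite_apply_eq_apply]
  set K : ℝ := (Fintype.card (P → β) : ℝ)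
  set r : ℝ := 1 - 1 / Fintype.card β
  have hsplit : ∀ (b x : ℝ), b * (K * (r * x + 1 / Fintype.card β)) =
      K * r * (b * x) + K / Fintype.card β * b := fun b x => by ring
  simp only [hsplit, Finset.sum_add_distrib, ← Finset.mul_sum, sum_sum_modMatrix]
  ring

end Snapshot

section Temporal

variable {V : Type*} [Fintype V] {P Q : Type*}

theorem sum_qTildeI_comp [Fintype P] {β : Type*} [Fintype β] [Nonempty β]
    (G : ℕ → SimpleGraph V) (a b : ℕ) (ω : ℝ) (π : V → ℕ → P) :
    ∑ c : P → β, qTildeI G a b ω (fun v t => c (π v t)) =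
      Fintype.card (P → β) * ((1 - 1 / Fintype.card β) * qTildeI G a b ω π +
        ω * Fintype.card V * #(Icc a (b - 1)) / Fintype.card β) := by
  set K : ℝ := (Fintype.card (P → β) : ℝ)
  set r : ℝ := 1 - 1 / Fintype.card β
  have hsnap : ∑ c : P → β, ∑ t ∈ Icc a b, snapTerm (G t) (fun v => c (π v t)) =
      K * r * ∑ t ∈ Icc a b, snapTerm (G t) (fun v => π v t) := by
    rw [Finset.sum_comm, Finset.mul_sum]
    exact sum_congr rfl fun t _ => sum_snapTerm_comp (G t) _
  have hloyalty : ∑ c : P → β, ∑ v, ∑ t ∈ Icc a (b - 1),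
      (if c (π v t) = c (π v (t + 1)) then (1 : ℝ) else 0) =
      K * r * (∑ v, ∑ t ∈ Icc a (b - 1), if π v t = π v (t + 1) then 1 else 0) +
        K * Fintype.card V * #(Icc a (b - 1)) / Fintype.card β := by
    have hpair : ∀ v, ∀ t, ∑ c : P → β, (if c (π v t) = c (π v (t + 1)) then (1 : ℝ) else 0) =
        K * r * (if π v t = π v (t + 1) then 1 else 0) + K / Fintype.card β := fun v t => by
      rw [sum_ite_apply_eq_apply]; ring
    rw [Finset.sum_comm]
    simp_rw [Finset.sum_comm (s := (univ : Finset (P → β))) (t := Icc a (b - 1)), hpair,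
      Finset.sum_add_distrib, ← Finset.mul_sum]
    simp only [sum_const, card_univ, nsmul_eq_mul]
    ring
  simp only [qTildeI, Finset.sum_add_distrib, ← Finset.mul_sum, hsnap, hloyalty]
  ring

theorem exists_qTildeI_comp_ge [Fintype P] {β : Type*} [Fintype β] [Nonempty β]
    (G : ℕ → SimpleGraph V) (a b : ℕ) (ω : ℝ) (π : V → ℕ → P) :
    ∃ c : P → β, (1 - 1 / Fintype.card β) * qTildeI G a b ω π +
        ω * Fintype.card V * #(Icc a (b - 1)) / Fintype.card β ≤
      qTildeI G a b ω (fun v t => c (π v t)) := by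
  obtain ⟨c, -, hc⟩ := Finset.exists_le_of_sum_le (univ_nonempty (α := P → β)) <| le_of_eq <|
    (sum_const _).trans ((nsmul_eq_mul _ _).trans (sum_qTildeI_comp G a b ω π).symm)
  exact ⟨c, hc⟩

theorem qTildeI_comp_of_injOn (G : ℕ → SimpleGraph V) (T : ℕ) (ω : ℝ) {π : V → ℕ → P}
    {ι : P → Q} (hι : Set.InjOn ι {x | ∃ v, ∃ t ∈ Icc 1 T, π v t = x}) :
    qTildeI G 1 T ω (fun v t => ι (π v t)) = qTildeI G 1 T ω π := by
  have hmem : ∀ v, ∀ t ∈ Icc 1 T, π v t ∈ {x | ∃ v, ∃ t ∈ Icc 1 T, π v t = x} :=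
    fun v t ht => ⟨v, t, ht, rfl⟩
  unfold qTildeI
  congr 1
  · refine sum_congr rfl fun t ht => snapTerm_comp_of_injOn (G t) (hι.mono ?_)
    rintro _ ⟨v, rfl⟩
    exact hmem v t ht
  · refine congrArg (ω * ·) (sum_congr rfl fun v _ => sum_congr rfl fun t ht => ?_)
    obtain ⟨h1, h2⟩ := mem_Icc.1 ht
    rw [hι.eq_iff (hmem v t (mem_Icc.2 ⟨h1, by omega⟩))
      (hmem v (t + 1) (mem_Icc.2 ⟨by omega, by omega⟩))]

theorem exists_qTildeI_fin_eq (G : ℕ → SimpleGraph V) (T : ℕ) (ω : ℝ) (π : V → ℕ → ℕ) :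
    ∃ N, ∃ π' : V → ℕ → Fin N, qTildeI G 1 T ω π' = qTildeI G 1 T ω π := by
  set M := (Icc 1 T ×ˢ univ).sup fun p : ℕ × V => π p.2 p.1
  refine ⟨M + 1, fun v t => Fin.ofNat (M + 1) (π v t), qTildeI_comp_of_injOn G T ω ?_⟩
  have hle : ∀ x ∈ {x | ∃ v, ∃ t ∈ Icc 1 T, π v t = x}, x < M + 1 := by
    rintro _ ⟨v, t, ht, rfl⟩
    exact Nat.lt_succ_of_le (le_sup (f := fun p : ℕ × V => π p.2 p.1)
      (mem_product.2 ⟨ht, mem_univ v⟩ : (t, v) ∈ Icc 1 T ×ˢ univ))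
  intro x hx y hy hxy
  simpa [Nat.mod_eq_of_lt (hle x hx), Nat.mod_eq_of_lt (hle y hy)] using congrArg Fin.val hxy

theorem bddAbove_range_qTildeI (G : ℕ → SimpleGraph V) (a b : ℕ) {ω : ℝ} (hω : 0 ≤ ω) :
    BddAbove (Set.range fun π : V → ℕ → P => qTildeI G a b ω π) := by
  refine ⟨#(Icc a b) * Fintype.card V ^ 2 + ω * (Fintype.card V * #(Icc a (b - 1))), ?_⟩
  rintro _ ⟨π, rfl⟩
  have hsnap : ∑ t ∈ Icc a b, snapTerm (G t) (fun v => π v t) ≤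
      #(Icc a b) * Fintype.card V ^ 2 := by
    simpa using sum_le_sum fun t (_ : t ∈ Icc a b) => snapTerm_le_card_sq (G t) fun v => π v t
  have hloyalty : ∑ v, ∑ t ∈ Icc a (b - 1), (if π v t = π v (t + 1) then (1 : ℝ) else 0) ≤
      Fintype.card V * #(Icc a (b - 1)) := by
    calc _ ≤ ∑ _v : V, ∑ _t ∈ Icc a (b - 1), (1 : ℝ) := by
          gcongr; split_ifs <;> norm_num
      _ = _ := by simp
  exact add_le_add hsnap (mul_le_mul_of_nonneg_left hloyalty hω)

end Temporal

theorem nonnormalised_temporal_k_modularity_bound_general {V : Type*} [Fintype V]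
    (T : ℕ) (G : ℕ → SimpleGraph V)
    (ω : ℝ) (hω : 0 ≤ ω) (k : ℕ) (hk : 2 ≤ k) :
    (1 - 1 / (k : ℝ)) * qTildeStar G T ω +
        (Fintype.card V : ℝ) * ω * ((T : ℝ) - 1) / (k : ℝ) ≤
      qTildeStarK G T ω k := by
  have : NeZero k := ⟨by omega⟩
  have hloyalty : (Fintype.card V : ℝ) * ω * ((T : ℝ) - 1) / k ≤
      ω * Fintype.card V * #(Icc 1 (T - 1)) / k := by
    have hT : (T : ℝ) - 1 ≤ #(Icc 1 (T - 1)) := by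
      rcases T with _ | T <;> simp
    rw [mul_comm (Fintype.card V : ℝ) ω]
    gcongr
  have hpartition : ∀ π : V → ℕ → ℕ, (1 - 1 / (k : ℝ)) * qTildeI G 1 T ω π +
      Fintype.card V * ω * ((T : ℝ) - 1) / k ≤ qTildeStarK G T ω k := by
    intro π
    obtain ⟨N, π', hπ'⟩ := exists_qTildeI_fin_eq G T ω π
    obtain ⟨c, hc⟩ := exists_qTildeI_comp_ge (β := Fin k) G 1 T ω π'
    rw [Fintype.card_fin, hπ'] at hc
    exact (add_le_add_right hloyalty _).trans
      (hc.trans (le_ciSup (bddAbove_range_qTildeI G 1 T hω) _))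
  have hr : 0 ≤ 1 - 1 / (k : ℝ) := by
    rw [sub_nonneg]; exact div_le_one_of_le₀ (by exact_mod_cast (by omega : 1 ≤ k)) k.cast_nonneg
  have hsup : ⨆ π : V → ℕ → ℕ, (1 - 1 / (k : ℝ)) * qTildeI G 1 T ω π ≤
      qTildeStarK G T ω k - Fintype.card V * ω * ((T : ℝ) - 1) / k :=
    ciSup_le fun π => le_sub_iff_add_le.2 (hpartition π)
  rw [qTildeStar, qTildeStarI, Real.mul_iSup_of_nonneg hr]
  linarith

/-- For any temporal graph `𝒢` with `n` vertices and lifetime `T` in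
which each snapshot has at least one edge, any `ω ≥ 0` and any integer `k ≥ 2`, the
non-normalised temporal `k`-modularity satisfies
`q̃*_{k,ω}(𝒢) ≥ (1 − 1/k)·q̃*_ω(𝒢) + n ω (T−1)/k`. -/
theorem nonnormalised_temporal_k_modularity_bound {V : Type*} [Fintype V]
    (T : ℕ) (hT : 1 ≤ T) (G : ℕ → SimpleGraph V)
    (hE : ∀ t ∈ Icc 1 T, (G t).edgeSet.Nonempty)
    (ω : ℝ) (hω : 0 ≤ ω) (k : ℕ) (hk : 2 ≤ k) :
    (1 - 1 / (k : ℝ)) * qTildeStar G T ω +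
        (Fintype.card V : ℝ) * ω * ((T : ℝ) - 1) / (k : ℝ) ≤
      qTildeStarK G T ω k :=
  nonnormalised_temporal_k_modularity_bound_general T G ω hω k hk

end TemporalModularity
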